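/- arXiv:2209.09478 — 5 statements merged into one kernel-verified Lean document; each statement's English description precedes it below -/
import Mathlib

section
/- Theorem 1 (Motion coordination on paths). Assume the communication graph G is undirected and connected, and that the first and second derivatives of every parametric function f^i_j are bounded on ℝ. Let ξ : [0,∞) → ℝ^{(n+1)N} be any solution of the coupled autonomous system ξ̇^i(t) = χ^i(ξ^i(t), w(t)) for all i ∈ {1,…,N}, where w(t) = (w^1(t),…,w^N(t)) collects the (n+1)-th component of each ξ^i(t). Then for every initial condition ξ(0) (with arbitrarily large initial composite error), the path-following errors satisfy ‖Φ^i(ξ^i(t))‖ → 0 as t → ∞ for every i ∈ {1,…,N}, and Dᵀ(w(t) − w*) → 0 as t → ∞; in particular, w^i(t) − w^j(t) → Δ^{ij} := w*_i − w*_j as t → ∞ for every edge (i,j) of G. -/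
/-!
Write `y^i = ẇ^i - (-1)^n` and `w̃ = w - w*`. Along a solution the path errors obey
`φ̇^i_j = -k^i_j φ^i_j - (f^i_j)'(w^i) y^i`, and `y^i = ∑_j k^i_j φ^i_j (f^i_j)'(w^i) + k_c c^i`.
Since `∑_i c^i = 0`, the function `V = ½ ∑ k φ² + ½ k_c w̃ᵀ L w̃` satisfies
`V̇ = -(∑ (k φ)² + ∑ y²)`. Hence `V` stays bounded, which bounds `φ` and, through `L = D Dᵀ`,
also `c = -L w̃`. Then every term of the dissipation `∑ (k φ)² + ∑ y²` is bounded with bounded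
derivative, and Barbalat's lemma sends the dissipation to `0`. So `φ → 0` and `y → 0`, hence
`c → 0`. Although `w̃` itself may be unbounded, `L w̃ → 0` forces `w̃ᵀ L w̃ = |Dᵀ w̃|² → 0` for the
symmetric `L`, and `w̃ᵀ L w̃` bounds `(w̃_i - w̃_j)²` on every edge.
-/

open Filter Topology Matrix Set

theorem sub_le_mul_sub_of_hasDerivAt_le {F F' : ℝ → ℝ} {a b C : ℝ} (hab : a ≤ b)
    (hF : ∀ s ∈ Icc a b, HasDerivAt F (F' s) s) (hC : ∀ s ∈ Icc a b, F' s ≤ C) :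
    F b - F a ≤ C * (b - a) := by
  refine (convex_Icc a b).image_sub_le_mul_sub_of_deriv_le
    (fun s hs => (hF s hs).continuousAt.continuousWithinAt)
    (fun s hs => (hF s (interior_subset hs)).differentiableAt.differentiableWithinAt)
    (fun s hs => ?_) a (left_mem_Icc.2 hab) b (right_mem_Icc.2 hab) hab
  rw [(hF s (interior_subset hs)).deriv]
  exact hC s (interior_subset hs)

theorem antitoneOn_Ici_of_hasDerivAt_nonpos {V V' : ℝ → ℝ} {T : ℝ}
    (hV : ∀ t ≥ T, HasDerivAt V (V' t) t) (hV' : ∀ t ≥ T, V' t ≤ 0) : AntitoneOn V (Ici T) :=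
  fun s hs t _ hst => by
    have := sub_le_mul_sub_of_hasDerivAt_le hst (fun r hr => hV r (hs.trans hr.1))
      fun r hr => hV' r (hs.trans hr.1)
    linarith

theorem isBoundedUnder_le_of_hasDerivAt_nonpos {V V' : ℝ → ℝ}
    (hV : ∀ᶠ t in atTop, HasDerivAt V (V' t) t) (hV' : ∀ᶠ t in atTop, V' t ≤ 0) :
    IsBoundedUnder (· ≤ ·) atTop V := by
  obtain ⟨T, hT⟩ := eventually_atTop.1 (hV.and hV')
  have hV_anti := antitoneOn_Ici_of_hasDerivAt_nonpos (fun t ht => (hT t ht).1)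
    fun t ht => (hT t ht).2
  exact isBoundedUnder_of_eventually_le (eventually_atTop.2 ⟨T, fun t ht =>
    hV_anti self_mem_Ici ht ht⟩)

theorem tendsto_of_antitoneOn_Ici {V : ℝ → ℝ} {T b : ℝ} (hV : AntitoneOn V (Ici T))
    (hb : ∀ t ≥ T, b ≤ V t) : ∃ ℓ, Tendsto V atTop (𝓝 ℓ) ∧ ∀ t ≥ T, ℓ ≤ V t := by
  have hW : Antitone fun t => V (max t T) := fun s t hst =>
    hV (le_max_right s T) (le_max_right t T) (max_le_max_right T hst)
  have hW_bdd : BddBelow (range fun t => V (max t T)) :=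
    ⟨b, by rintro _ ⟨t, rfl⟩; exact hb _ (le_max_right t T)⟩
  refine ⟨_, (tendsto_atTop_ciInf hW hW_bdd).congr' ?_, fun t ht => ?_⟩
  · filter_upwards [eventually_ge_atTop T] with t ht
    rw [max_eq_left ht]
  · simpa [max_eq_left ht] using ciInf_le hW_bdd t

theorem tendsto_zero_of_sq_le {α : Type*} {l : Filter α} {g h : α → ℝ}
    (hgh : ∀ᶠ a in l, g a ^ 2 ≤ h a) (hh : Tendsto h l (𝓝 0)) : Tendsto g l (𝓝 0) :=
  squeeze_zero_norm' (hgh.mono fun _ ha => Real.abs_le_sqrt ha) (by simpa using hh.sqrt)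

theorem boundedAtFilter_of_abs_le {α : Type*} {l : Filter α} {g : α → ℝ} {C : ℝ}
    (hg : ∀ᶠ a in l, |g a| ≤ C) : BoundedAtFilter l g :=
  Asymptotics.IsBigO.of_bound C (hg.mono fun _ ha => by simpa using ha)

theorem boundedAtFilter_of_sq_le {α : Type*} {l : Filter α} {g : α → ℝ} {C : ℝ}
    (hg : ∀ᶠ a in l, g a ^ 2 ≤ C) : BoundedAtFilter l g :=
  boundedAtFilter_of_abs_le (hg.mono fun _ => Real.abs_le_sqrt)

-- The quantitative core of Barbalat's lemma: a large value of `h` costs `V` a definite drop.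
theorem sq_le_of_hasDerivAt_neg {V h h' : ℝ → ℝ} {M t : ℝ} (hM : 0 < M)
    (hV : ∀ s ≥ t, HasDerivAt V (-h s) s) (hh : ∀ s ≥ t, HasDerivAt h (h' s) s)
    (hh' : ∀ s ≥ t, |h' s| ≤ M) (ht : 0 ≤ h t) :
    h t ^ 2 ≤ 4 * M * (V t - V (t + h t / (2 * M))) := by
  set δ := h t / (2 * M)
  have hδ : 0 ≤ δ := by positivity
  have hMδ : M * δ = h t / 2 := by unfold δ; field_simp
  have h_half : ∀ s ∈ Icc t (t + δ), h t / 2 ≤ h s := by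
    intro s hs
    have := sub_le_mul_sub_of_hasDerivAt_le (F := fun s => -h s) (F' := fun s => -h' s) hs.1
      (fun r hr => (hh r hr.1).neg) (fun r hr => (neg_le_abs _).trans (hh' r hr.1))
    nlinarith [hs.2]
  have hV_drop := sub_le_mul_sub_of_hasDerivAt_le (F := V) (C := -(h t / 2))
    (le_add_of_nonneg_right hδ) (fun s hs => hV s hs.1) (fun s hs => neg_le_neg (h_half s hs))
  calc h t ^ 2 = 4 * M * (h t / 2 * δ) := by linear_combination (-2 * h t) * hMδ
    _ ≤ 4 * M * (V t - V (t + δ)) := by gcongr; linarith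

/-- Barbalat's lemma. -/
theorem tendsto_zero_of_hasDerivAt_neg {V h h' : ℝ → ℝ}
    (hV : ∀ᶠ t in atTop, HasDerivAt V (-h t) t) (hV_bdd : IsBoundedUnder (· ≥ ·) atTop V)
    (hh : ∀ᶠ t in atTop, HasDerivAt h (h' t) t) (hh' : BoundedAtFilter atTop h')
    (h_nonneg : ∀ᶠ t in atTop, 0 ≤ h t) : Tendsto h atTop (𝓝 0) := by
  obtain ⟨M, hM⟩ := hh'.bound
  obtain ⟨b, hb : ∀ᶠ t in atTop, b ≤ V t⟩ := hV_bdd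
  obtain ⟨T, hT⟩ := eventually_atTop.1 (hV.and <| hh.and <| hM.and <| hb.and h_nonneg)
  simp only [imp_and, forall_and] at hT
  obtain ⟨hV, hh, hM, hb, h_nonneg⟩ := hT
  have hM' : ∀ t ≥ T, |h' t| ≤ max M 1 := fun t ht => by
    simpa using ((hM t ht).trans_eq (by simp)).trans (le_max_left M 1)
  obtain ⟨ℓ, hℓ, hℓ_le⟩ := tendsto_of_antitoneOn_Ici
    (antitoneOn_Ici_of_hasDerivAt_nonpos hV fun t ht => neg_nonpos.2 (h_nonneg t ht)) hb
  refine tendsto_zero_of_sq_le (h := fun t => 4 * max M 1 * (V t - ℓ)) ?_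
    (by simpa using (hℓ.sub_const ℓ).const_mul (4 * max M 1))
  filter_upwards [eventually_ge_atTop T] with t ht
  have hδ : T ≤ t + h t / (2 * max M 1) :=
    le_add_of_le_of_nonneg ht (by have := h_nonneg t ht; positivity)
  calc h t ^ 2 ≤ 4 * max M 1 * (V t - V (t + h t / (2 * max M 1))) :=
        sq_le_of_hasDerivAt_neg (by positivity) (fun s hs => hV s (ht.trans hs))
          (fun s hs => hh s (ht.trans hs)) (fun s hs => hM' s (ht.trans hs)) (h_nonneg t ht)
    _ ≤ 4 * max M 1 * (V t - ℓ) := by gcongr; exact hℓ_le _ hδ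

def IsBoundedWithBoundedDeriv (g : ℝ → ℝ) : Prop :=
  BoundedAtFilter atTop g ∧
    ∃ g' : ℝ → ℝ, (∀ᶠ t in atTop, HasDerivAt g (g' t) t) ∧ BoundedAtFilter atTop g'

namespace IsBoundedWithBoundedDeriv

variable {f g : ℝ → ℝ}

theorem const (c : ℝ) : IsBoundedWithBoundedDeriv fun _ => c :=
  ⟨const_boundedAtFilter atTop c, 0, .of_forall fun _ => hasDerivAt_const _ _,
    const_boundedAtFilter atTop 0⟩

theorem add (hf : IsBoundedWithBoundedDeriv f) (hg : IsBoundedWithBoundedDeriv g) :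
    IsBoundedWithBoundedDeriv fun t => f t + g t := by
  obtain ⟨hf, f', hff', hf'⟩ := hf
  obtain ⟨hg, g', hgg', hg'⟩ := hg
  exact ⟨hf.add hg, fun t => f' t + g' t, hff'.and hgg' |>.mono fun t h => h.1.add h.2,
    hf'.add hg'⟩

theorem mul (hf : IsBoundedWithBoundedDeriv f) (hg : IsBoundedWithBoundedDeriv g) :
    IsBoundedWithBoundedDeriv fun t => f t * g t := by
  obtain ⟨hf, f', hff', hf'⟩ := hf
  obtain ⟨hg, g', hgg', hg'⟩ := hg
  exact ⟨hf.mul hg, fun t => f' t * g t + f t * g' t,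
    hff'.and hgg' |>.mono fun t h => h.1.mul h.2, (hf'.mul hg).add (hf.mul hg')⟩

theorem pow (hf : IsBoundedWithBoundedDeriv f) (m : ℕ) :
    IsBoundedWithBoundedDeriv fun t => f t ^ m := by
  induction m with
  | zero => simpa using const 1
  | succ m ih => simpa [pow_succ] using ih.mul hf

theorem sum {ι : Type*} {s : Finset ι} {f : ι → ℝ → ℝ}
    (hf : ∀ i ∈ s, IsBoundedWithBoundedDeriv (f i)) :
    IsBoundedWithBoundedDeriv fun t => ∑ i ∈ s, f i t := by
  choose! f' hff' hf' using fun i hi => (hf i hi).2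
  exact ⟨Asymptotics.IsBigO.fun_sum fun i hi => (hf i hi).1, fun t => ∑ i ∈ s, f' i t,
    (eventually_all_finset s).2 hff' |>.mono fun t h => HasDerivAt.fun_sum h,
    Asymptotics.IsBigO.fun_sum hf'⟩

theorem comp {F : ℝ → ℝ} {C C' : ℝ} (hF : Differentiable ℝ F) (hFC : ∀ x, |F x| ≤ C)
    (hF'C' : ∀ x, |deriv F x| ≤ C') {g' : ℝ → ℝ} (hgg' : ∀ᶠ t in atTop, HasDerivAt g (g' t) t)
    (hg' : BoundedAtFilter atTop g') : IsBoundedWithBoundedDeriv fun t => F (g t) :=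
  ⟨boundedAtFilter_of_abs_le (.of_forall fun t => hFC (g t)),
    fun t => deriv F (g t) * g' t, hgg'.mono fun t h => (hF (g t)).hasDerivAt.comp t h,
    (boundedAtFilter_of_abs_le (.of_forall fun t => hF'C' (g t))).mul hg'⟩

end IsBoundedWithBoundedDeriv

theorem single_le_sum_sum {ι κ : Type*} [Fintype ι] [Fintype κ] {g : ι → κ → ℝ}
    (hg : ∀ i j, 0 ≤ g i j) (i : ι) (j : κ) : g i j ≤ ∑ i, ∑ j, g i j :=
  (Finset.single_le_sum (fun j _ => hg i j) (Finset.mem_univ j)).trans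
    (Finset.single_le_sum (f := fun i => ∑ j, g i j)
      (fun i _ => Finset.sum_nonneg fun j _ => hg i j) (Finset.mem_univ i))

namespace Matrix

variable {ι : Type*} [Fintype ι] {A : Matrix ι ι ℝ}

theorem tendsto_dotProduct_mulVec_of_tendsto_mulVec {α : Type*} {l : Filter α}
    (hA : A.IsSymm) {v : α → ι → ℝ} (hv : Tendsto (fun a => A *ᵥ v a) l (𝓝 0)) :
    Tendsto (fun a => v a ⬝ᵥ A *ᵥ v a) l (𝓝 0) := by
  obtain ⟨g, hg⟩ := A.mulVecLin.rangeRestrict.exists_rightInverse_of_surjective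
    A.mulVecLin.range_rangeRestrict
  -- `u a` solves `A u = A (v a)` and depends linearly, hence continuously, on `A (v a)`.
  set r := fun a => A.mulVecLin.rangeRestrict (v a)
  set u := fun a => g (r a)
  have hAu : ∀ a, A *ᵥ u a = A *ᵥ v a := fun a =>
    congrArg Subtype.val (LinearMap.congr_fun hg (r a))
  have hu : Tendsto u l (𝓝 0) := by
    have := (LinearMap.continuous_of_finiteDimensional g).tendsto 0 |>.comp
      (tendsto_subtype_rng.2 hv : Tendsto r l (𝓝 0))
    rwa [map_zero] at this
  have key : ∀ a, (A *ᵥ v a) ⬝ᵥ u a = v a ⬝ᵥ A *ᵥ v a := fun a => by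
    conv_rhs => rw [← hAu]
    rw [dotProduct_mulVec, ← mulVec_transpose, hA.eq]
  have h := ((continuous_fst.dotProduct continuous_snd).tendsto ((0 : ι → ℝ), (0 : ι → ℝ))).comp
    (hv.prodMk_nhds hu)
  rw [dotProduct_zero] at h
  exact h.congr key

theorem hasDerivAt_mulVec {m : Type*} [Fintype m] (B : Matrix m ι ℝ) {v : ℝ → ι → ℝ}
    {v' : ι → ℝ} {t : ℝ} (hv : HasDerivAt v v' t) : HasDerivAt (fun s => B *ᵥ v s) (B *ᵥ v') t :=
  (LinearMap.toContinuousLinearMap B.mulVecLin).hasFDerivAt.comp_hasDerivAt t hv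

theorem hasDerivAt_dotProduct_mulVec (hA : A.IsSymm) {v : ℝ → ι → ℝ} {v' : ι → ℝ} {t : ℝ}
    (hv : HasDerivAt v v' t) :
    HasDerivAt (fun s => v s ⬝ᵥ A *ᵥ v s) (2 * (v' ⬝ᵥ A *ᵥ v t)) t := by
  have hsum : HasDerivAt (fun s => ∑ i, v s i * (A *ᵥ v s) i)
      (∑ i, (v' i * (A *ᵥ v t) i + v t i * (A *ᵥ v') i)) t :=
    HasDerivAt.fun_sum fun i _ =>
      (hasDerivAt_pi.1 hv i).mul (hasDerivAt_pi.1 (A.hasDerivAt_mulVec hv) i)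
  refine hsum.congr_deriv ?_
  rw [Finset.sum_add_distrib]
  change v' ⬝ᵥ A *ᵥ v t + v t ⬝ᵥ A *ᵥ v' = _
  rw [dotProduct_mulVec (v t), ← mulVec_transpose, hA.eq, dotProduct_comm]
  ring

theorem dotProduct_mul_transpose_mulVec {κ : Type*} [Fintype κ] (D : Matrix ι κ ℝ)
    (v : ι → ℝ) : v ⬝ᵥ (D * Dᵀ) *ᵥ v = (Dᵀ *ᵥ v) ⬝ᵥ (Dᵀ *ᵥ v) := by
  rw [← mulVec_mulVec, dotProduct_mulVec, ← mulVec_transpose]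

theorem isSymm_mul_transpose {m κ : Type*} [Fintype κ] (D : Matrix m κ ℝ) :
    (D * Dᵀ).IsSymm := by
  rw [IsSymm, transpose_mul, transpose_transpose]

theorem dotProduct_mul_transpose_mulVec_nonneg {κ : Type*} [Fintype κ] (D : Matrix ι κ ℝ)
    (v : ι → ℝ) : 0 ≤ v ⬝ᵥ (D * Dᵀ) *ᵥ v := by
  rw [dotProduct_mul_transpose_mulVec]
  exact Finset.sum_nonneg fun e _ => mul_self_nonneg _

theorem sq_transpose_mulVec_le {κ : Type*} [Fintype κ] (D : Matrix ι κ ℝ) (v : ι → ℝ) (e : κ) :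
    (Dᵀ *ᵥ v) e ^ 2 ≤ v ⬝ᵥ (D * Dᵀ) *ᵥ v := by
  rw [dotProduct_mul_transpose_mulVec, sq]
  exact Finset.single_le_sum (f := fun e => (Dᵀ *ᵥ v) e * (Dᵀ *ᵥ v) e)
    (fun e _ => mul_self_nonneg _) (Finset.mem_univ e)

end Matrix

theorem SimpleGraph.sq_sub_le_two_mul_dotProduct_lapMatrix_mulVec {V : Type*} [Fintype V]
    [DecidableEq V] (G : SimpleGraph V) [DecidableRel G.Adj] {i j : V} (hij : G.Adj i j)
    (v : V → ℝ) : (v i - v j) ^ 2 ≤ 2 * (v ⬝ᵥ G.lapMatrix ℝ *ᵥ v) := by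
  have hQ := G.lapMatrix_toLinearMap₂' ℝ v
  rw [toLinearMap₂'_apply'] at hQ
  have := single_le_sum_sum (g := fun a b => if G.Adj a b then (v a - v b) ^ 2 else 0)
    (fun a b => by split_ifs <;> positivity) i j
  simp only [hij, if_true] at this
  linarith

section CoordinatingGVF

variable {ι κ E : Type*} [Fintype ι] [Fintype κ] [Fintype E] {D : Matrix ι E ℝ}
  (σ : ℝ) (f : ι → κ → ℝ → ℝ) (k : ι → κ → ℝ) (kc : ℝ) (L : Matrix ι ι ℝ) (wstar : ι → ℝ)
  (x : ℝ → ι → κ → ℝ) (w : ℝ → ι → ℝ)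

/-! `pathError` is `φ^i_j`, `coordination` is `c(w)` and `speedCorrection` is the last entry
of `χ^i` minus the sign `σ`, which is `(-1)^n` in the paper. -/

def pathError (t : ℝ) (i : ι) (j : κ) : ℝ :=
  x t i j - f i j (w t i)

def coordination (t : ℝ) : ι → ℝ :=
  -(L *ᵥ (w t - wstar))

noncomputable def speedCorrection (t : ℝ) (i : ι) : ℝ :=
  ∑ j, k i j * pathError f x w t i j * deriv (f i j) (w t i) + kc * coordination L wstar w t i

structure IsCoordinatingGVFSolution : Prop where
  hasDerivAt_x : ∀ i j, ∀ᶠ t in atTop, HasDerivAt (fun s => x s i j)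
    (σ * deriv (f i j) (w t i) - k i j * pathError f x w t i j) t
  hasDerivAt_w : ∀ i, ∀ᶠ t in atTop, HasDerivAt (fun s => w s i)
    (σ + speedCorrection f k kc L wstar x w t i) t

noncomputable def lyapunov (t : ℝ) : ℝ :=
  (∑ i, ∑ j, k i j * pathError f x w t i j ^ 2) / 2
    + kc / 2 * ((w t - wstar) ⬝ᵥ L *ᵥ (w t - wstar))

noncomputable def dissipation (t : ℝ) : ℝ :=
  ∑ i, ∑ j, (k i j * pathError f x w t i j) ^ 2 + ∑ i, speedCorrection f k kc L wstar x w t i ^ 2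

variable {σ f k kc L wstar x w}

theorem IsCoordinatingGVFSolution.hasDerivAt_pathError
    (hsol : IsCoordinatingGVFSolution σ f k kc L wstar x w) (hf : ∀ i j, Differentiable ℝ (f i j))
    (i : ι) (j : κ) :
    ∀ᶠ t in atTop, HasDerivAt (fun s => pathError f x w s i j)
      (-(k i j * pathError f x w t i j)
        - deriv (f i j) (w t i) * speedCorrection f k kc L wstar x w t i) t := by
  filter_upwards [hsol.hasDerivAt_x i j, hsol.hasDerivAt_w i] with t hx hw
  exact (hx.sub ((hf i j (w t i)).hasDerivAt.comp t hw)).congr_deriv (by ring)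

theorem IsCoordinatingGVFSolution.hasDerivAt_sub
    (hsol : IsCoordinatingGVFSolution σ f k kc L wstar x w) :
    ∀ᶠ t in atTop, HasDerivAt (fun s => w s - wstar)
      (fun i => σ + speedCorrection f k kc L wstar x w t i) t := by
  filter_upwards [eventually_all.2 hsol.hasDerivAt_w] with t hw
  exact (hasDerivAt_pi.2 hw).sub_const wstar

theorem sum_coordination_eq_zero (hL : L.IsSymm) (hL1 : L *ᵥ 1 = 0) (t : ℝ) :
    ∑ i, coordination L wstar w t i = 0 := by
  have : 1 ⬝ᵥ coordination L wstar w t = 0 := by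
    rw [coordination, dotProduct_neg, dotProduct_mulVec, ← mulVec_transpose, hL.eq, hL1,
      zero_dotProduct, neg_zero]
  simpa [dotProduct] using this

theorem IsCoordinatingGVFSolution.hasDerivAt_lyapunov
    (hsol : IsCoordinatingGVFSolution σ f k kc L wstar x w) (hf : ∀ i j, Differentiable ℝ (f i j))
    (hL : L.IsSymm) (hL1 : L *ᵥ 1 = 0) :
    ∀ᶠ t in atTop, HasDerivAt (lyapunov f k kc L wstar x w)
      (-dissipation f k kc L wstar x w t) t := by
  filter_upwards [eventually_all.2 fun i => eventually_all.2 (hsol.hasDerivAt_pathError hf i),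
    hsol.hasDerivAt_sub] with t hφ hw
  have hP := HasDerivAt.fun_sum (u := Finset.univ) fun i _ => HasDerivAt.fun_sum
    (u := Finset.univ) fun j _ => ((hφ i j).fun_pow 2).const_mul (k i j)
  refine ((hP.div_const 2).add
    ((Matrix.hasDerivAt_dotProduct_mulVec hL hw).const_mul (kc / 2))).congr_deriv ?_
  set y := speedCorrection f k kc L wstar x w t
  set c := coordination L wstar w t
  have hS : ∀ i, ∑ j, k i j * pathError f x w t i j * deriv (f i j) (w t i) = y i - kc * c i :=
    fun i => by simp only [y, speedCorrection]; ring
  have hP_i : ∀ i, ∑ j, k i j * ((2 : ℕ) * pathError f x w t i j ^ (2 - 1) *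
        (-(k i j * pathError f x w t i j) - deriv (f i j) (w t i) * y i))
      = -2 * ∑ j, (k i j * pathError f x w t i j) ^ 2 - 2 * y i * (y i - kc * c i) := by
    intro i
    rw [← hS, Finset.mul_sum, Finset.mul_sum, ← Finset.sum_sub_distrib]
    exact Finset.sum_congr rfl fun j _ => by push_cast; ring
  rw [show L *ᵥ (w t - wstar) = -c from (neg_neg _).symm, dotProduct_neg]
  calc _ = ∑ i, (-∑ j, (k i j * pathError f x w t i j) ^ 2 - y i ^ 2 - kc * σ * c i) := by
        rw [Finset.sum_congr rfl fun i _ => hP_i i, dotProduct, Finset.sum_div,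
          ← Finset.sum_neg_distrib, Finset.mul_sum, Finset.mul_sum, ← Finset.sum_add_distrib]
        exact Finset.sum_congr rfl fun i _ => by ring
    _ = -dissipation f k kc L wstar x w t := by
        have hc : ∑ i, c i = 0 := sum_coordination_eq_zero hL hL1 t
        simp only [Finset.sum_sub_distrib, ← Finset.mul_sum, Finset.sum_neg_distrib, hc, mul_zero,
          sub_zero, dissipation, neg_add']
        rfl

theorem dissipation_nonneg (t : ℝ) : 0 ≤ dissipation f k kc L wstar x w t := by
  unfold dissipation; positivity

theorem mul_pathError_sq_le_two_mul_lyapunov (hk : ∀ i j, 0 ≤ k i j) (hkc : 0 ≤ kc)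
    (hLD : L = D * Dᵀ) (t : ℝ) (i : ι) (j : κ) :
    k i j * pathError f x w t i j ^ 2 ≤ 2 * lyapunov f k kc L wstar x w t := by
  have hQ := hLD ▸ D.dotProduct_mul_transpose_mulVec_nonneg (w t - wstar)
  have := single_le_sum_sum (fun i j => mul_nonneg (hk i j) (sq_nonneg (pathError f x w t i j))) i j
  unfold lyapunov
  nlinarith

theorem mul_dotProduct_le_two_mul_lyapunov (hk : ∀ i j, 0 ≤ k i j) (t : ℝ) :
    kc * ((w t - wstar) ⬝ᵥ L *ᵥ (w t - wstar)) ≤ 2 * lyapunov f k kc L wstar x w t := by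
  have := Finset.sum_nonneg fun i (_ : i ∈ Finset.univ) => Finset.sum_nonneg
    fun j (_ : j ∈ Finset.univ) => mul_nonneg (hk i j) (sq_nonneg (pathError f x w t i j))
  unfold lyapunov
  linarith

theorem lyapunov_nonneg (hk : ∀ i j, 0 ≤ k i j) (hkc : 0 ≤ kc) (hLD : L = D * Dᵀ) (t : ℝ) :
    0 ≤ lyapunov f k kc L wstar x w t := by
  have hQ := hLD ▸ D.dotProduct_mul_transpose_mulVec_nonneg (w t - wstar)
  have hP := Finset.sum_nonneg fun i (_ : i ∈ Finset.univ) => Finset.sum_nonneg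
    fun j (_ : j ∈ Finset.univ) => mul_nonneg (hk i j) (sq_nonneg (pathError f x w t i j))
  unfold lyapunov
  positivity

theorem boundedAtFilter_pathError (hk : ∀ i j, 0 < k i j) (hkc : 0 ≤ kc) (hLD : L = D * Dᵀ)
    (hV : IsBoundedUnder (· ≤ ·) atTop (lyapunov f k kc L wstar x w)) (i : ι) (j : κ) :
    BoundedAtFilter atTop fun t => pathError f x w t i j := by
  obtain ⟨C, hC : ∀ᶠ t in atTop, lyapunov f k kc L wstar x w t ≤ C⟩ := hV
  refine boundedAtFilter_of_sq_le (C := 2 * C / k i j) (hC.mono fun t ht => ?_)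
  rw [le_div_iff₀' (hk i j)]
  calc k i j * pathError f x w t i j ^ 2 ≤ 2 * lyapunov f k kc L wstar x w t :=
        mul_pathError_sq_le_two_mul_lyapunov (fun i j => (hk i j).le) hkc hLD t i j
    _ ≤ 2 * C := by linarith

theorem boundedAtFilter_coordination (hk : ∀ i j, 0 ≤ k i j) (hkc : 0 < kc) (hLD : L = D * Dᵀ)
    (hV : IsBoundedUnder (· ≤ ·) atTop (lyapunov f k kc L wstar x w)) (i : ι) :
    BoundedAtFilter atTop fun t => coordination L wstar w t i := by
  obtain ⟨C, hC : ∀ᶠ t in atTop, lyapunov f k kc L wstar x w t ≤ C⟩ := hV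
  have hq : ∀ e, BoundedAtFilter atTop fun t => (Dᵀ *ᵥ (w t - wstar)) e := fun e =>
    boundedAtFilter_of_sq_le (C := 2 * C / kc) <| hC.mono fun t ht => by
      rw [le_div_iff₀' hkc]
      calc kc * (Dᵀ *ᵥ (w t - wstar)) e ^ 2 ≤ kc * ((w t - wstar) ⬝ᵥ L *ᵥ (w t - wstar)) :=
            mul_le_mul_of_nonneg_left (hLD ▸ D.sq_transpose_mulVec_le _ e) hkc.le
        _ ≤ 2 * lyapunov f k kc L wstar x w t := mul_dotProduct_le_two_mul_lyapunov hk t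
        _ ≤ 2 * C := by linarith
  have hc : (fun t => coordination L wstar w t i)
      = fun t => -∑ e, D i e * (Dᵀ *ᵥ (w t - wstar)) e := by
    ext t
    rw [coordination, hLD, ← mulVec_mulVec]
    rfl
  rw [hc]
  exact (Asymptotics.IsBigO.fun_sum fun e _ => (hq e).const_mul_left (D i e)).neg_left

theorem boundedAtFilter_speedCorrection
    (hφ : ∀ i j, BoundedAtFilter atTop fun t => pathError f x w t i j)
    (hc : ∀ i, BoundedAtFilter atTop fun t => coordination L wstar w t i)
    (hf' : ∀ i j, ∃ C, ∀ s, |deriv (f i j) s| ≤ C) (i : ι) :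
    BoundedAtFilter atTop fun t => speedCorrection f k kc L wstar x w t i := by
  refine Asymptotics.IsBigO.add (Asymptotics.IsBigO.fun_sum fun j _ => ?_)
    ((hc i).const_mul_left kc)
  obtain ⟨C, hC⟩ := hf' i j
  exact BoundedAtFilter.mul ((hφ i j).const_mul_left (k i j))
    (boundedAtFilter_of_abs_le (.of_forall fun t => hC (w t i)))

theorem IsCoordinatingGVFSolution.hasDerivAt_coordination
    (hsol : IsCoordinatingGVFSolution σ f k kc L wstar x w) (i : ι) :
    ∀ᶠ t in atTop, HasDerivAt (fun s => coordination L wstar w s i)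
      (-(L *ᵥ fun m => σ + speedCorrection f k kc L wstar x w t m) i) t := by
  filter_upwards [hsol.hasDerivAt_sub] with t hw
  exact hasDerivAt_pi.1 (L.hasDerivAt_mulVec hw).neg i

theorem IsCoordinatingGVFSolution.isBoundedWithBoundedDeriv_coordination
    (hsol : IsCoordinatingGVFSolution σ f k kc L wstar x w)
    (hc : ∀ i, BoundedAtFilter atTop fun t => coordination L wstar w t i)
    (hy : ∀ i, BoundedAtFilter atTop fun t => speedCorrection f k kc L wstar x w t i) (i : ι) :
    IsBoundedWithBoundedDeriv fun t => coordination L wstar w t i :=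
  ⟨hc i, _, hsol.hasDerivAt_coordination i, Asymptotics.IsBigO.neg_left <|
    Asymptotics.IsBigO.fun_sum fun m _ =>
      ((const_boundedAtFilter atTop σ).add (hy m)).const_mul_left (L i m)⟩

theorem IsCoordinatingGVFSolution.isBoundedWithBoundedDeriv_pathError
    (hsol : IsCoordinatingGVFSolution σ f k kc L wstar x w) (hf : ∀ i j, Differentiable ℝ (f i j))
    (hf' : ∀ i j, ∃ C, ∀ s, |deriv (f i j) s| ≤ C)
    (hφ : ∀ i j, BoundedAtFilter atTop fun t => pathError f x w t i j)
    (hy : ∀ i, BoundedAtFilter atTop fun t => speedCorrection f k kc L wstar x w t i)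
    (i : ι) (j : κ) : IsBoundedWithBoundedDeriv fun t => pathError f x w t i j := by
  obtain ⟨C, hC⟩ := hf' i j
  exact ⟨hφ i j, _, hsol.hasDerivAt_pathError hf i j,
    ((hφ i j).const_mul_left (k i j)).neg_left.sub <| BoundedAtFilter.mul
      (boundedAtFilter_of_abs_le (.of_forall fun t => hC (w t i))) (hy i)⟩

theorem IsCoordinatingGVFSolution.isBoundedWithBoundedDeriv_deriv_comp
    (hsol : IsCoordinatingGVFSolution σ f k kc L wstar x w) (hf : ∀ i j, ContDiff ℝ 2 (f i j))
    (hf' : ∀ i j, ∃ C, ∀ s, |deriv (f i j) s| ≤ C ∧ |deriv (deriv (f i j)) s| ≤ C)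
    (hy : ∀ i, BoundedAtFilter atTop fun t => speedCorrection f k kc L wstar x w t i)
    (i : ι) (j : κ) : IsBoundedWithBoundedDeriv fun t => deriv (f i j) (w t i) := by
  obtain ⟨C, hC⟩ := hf' i j
  exact .comp (by simpa using (hf i j).differentiable_iteratedDeriv 1 (by norm_num))
    (fun s => (hC s).1) (fun s => (hC s).2) (hsol.hasDerivAt_w i)
    ((const_boundedAtFilter atTop σ).add (hy i))

theorem IsCoordinatingGVFSolution.isBoundedWithBoundedDeriv_dissipation
    (hsol : IsCoordinatingGVFSolution σ f k kc L wstar x w) (hf : ∀ i j, ContDiff ℝ 2 (f i j))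
    (hf' : ∀ i j, ∃ C, ∀ s, |deriv (f i j) s| ≤ C ∧ |deriv (deriv (f i j)) s| ≤ C)
    (hk : ∀ i j, 0 < k i j) (hkc : 0 < kc) (hLD : L = D * Dᵀ) (hL1 : L *ᵥ 1 = 0) :
    IsBoundedWithBoundedDeriv (dissipation f k kc L wstar x w) := by
  have hf₁ i j : Differentiable ℝ (f i j) := (hf i j).differentiable (by norm_num)
  have hL : L.IsSymm := hLD ▸ D.isSymm_mul_transpose
  have hV := isBoundedUnder_le_of_hasDerivAt_nonpos (hsol.hasDerivAt_lyapunov hf₁ hL hL1)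
    (.of_forall fun t => neg_nonpos.2 (dissipation_nonneg t))
  have hφ := boundedAtFilter_pathError hk hkc.le hLD hV
  have hc := boundedAtFilter_coordination (fun i j => (hk i j).le) hkc hLD hV
  have hf'₁ i j : ∃ C, ∀ s, |deriv (f i j) s| ≤ C := (hf' i j).imp fun _ h s => (h s).1
  have hy := boundedAtFilter_speedCorrection (k := k) (kc := kc) hφ hc hf'₁
  have hφ' := hsol.isBoundedWithBoundedDeriv_pathError hf₁ hf'₁ hφ hy
  have hc' := hsol.isBoundedWithBoundedDeriv_coordination hc hy
  have hdf := hsol.isBoundedWithBoundedDeriv_deriv_comp hf hf' hy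
  have hy' i : IsBoundedWithBoundedDeriv fun t => speedCorrection f k kc L wstar x w t i :=
    (IsBoundedWithBoundedDeriv.sum fun j _ => ((IsBoundedWithBoundedDeriv.const (k i j)).mul
      (hφ' i j)).mul (hdf i j)).add
      ((IsBoundedWithBoundedDeriv.const kc).mul (hc' i))
  exact (IsBoundedWithBoundedDeriv.sum fun i _ => IsBoundedWithBoundedDeriv.sum fun j _ =>
    ((IsBoundedWithBoundedDeriv.const (k i j)).mul (hφ' i j)).pow 2).add
    (IsBoundedWithBoundedDeriv.sum fun i _ => (hy' i).pow 2)

theorem IsCoordinatingGVFSolution.tendsto_dissipation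
    (hsol : IsCoordinatingGVFSolution σ f k kc L wstar x w) (hf : ∀ i j, ContDiff ℝ 2 (f i j))
    (hf' : ∀ i j, ∃ C, ∀ s, |deriv (f i j) s| ≤ C ∧ |deriv (deriv (f i j)) s| ≤ C)
    (hk : ∀ i j, 0 < k i j) (hkc : 0 < kc) (hLD : L = D * Dᵀ) (hL1 : L *ᵥ 1 = 0) :
    Tendsto (dissipation f k kc L wstar x w) atTop (𝓝 0) := by
  obtain ⟨-, _, hh, hh'⟩ := hsol.isBoundedWithBoundedDeriv_dissipation hf hf' hk hkc hLD hL1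
  exact tendsto_zero_of_hasDerivAt_neg
    (hsol.hasDerivAt_lyapunov (fun i j => (hf i j).differentiable (by norm_num))
      (hLD ▸ D.isSymm_mul_transpose) hL1)
    (isBoundedUnder_of_eventually_ge (.of_forall
      (lyapunov_nonneg (fun i j => (hk i j).le) hkc.le hLD)))
    hh hh' (.of_forall dissipation_nonneg)

theorem tendsto_pathError_of_tendsto_dissipation (hk : ∀ i j, 0 < k i j)
    (hh : Tendsto (dissipation f k kc L wstar x w) atTop (𝓝 0)) (i : ι) (j : κ) :
    Tendsto (fun t => pathError f x w t i j) atTop (𝓝 0) := by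
  refine tendsto_zero_of_sq_le (h := fun t => dissipation f k kc L wstar x w t / k i j ^ 2)
    (.of_forall fun t => ?_) (by simpa using hh.div_const (k i j ^ 2))
  rw [le_div_iff₀ (pow_pos (hk i j) 2), mul_comm, ← mul_pow]
  exact (single_le_sum_sum (fun i j => sq_nonneg (k i j * pathError f x w t i j)) i j).trans
    (le_add_of_nonneg_right (Finset.sum_nonneg fun i _ => sq_nonneg _))

theorem tendsto_speedCorrection_of_tendsto_dissipation
    (hh : Tendsto (dissipation f k kc L wstar x w) atTop (𝓝 0)) (i : ι) :
    Tendsto (fun t => speedCorrection f k kc L wstar x w t i) atTop (𝓝 0) :=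
  tendsto_zero_of_sq_le (.of_forall fun t =>
    (Finset.single_le_sum (fun i _ => sq_nonneg (speedCorrection f k kc L wstar x w t i))
      (Finset.mem_univ i)).trans
    (le_add_of_nonneg_left (Finset.sum_nonneg fun _ _ => Finset.sum_nonneg fun _ _ =>
      sq_nonneg _))) hh

theorem tendsto_coordination_of_tendsto_dissipation (hk : ∀ i j, 0 < k i j) (hkc : kc ≠ 0)
    (hf' : ∀ i j, ∃ C, ∀ s, |deriv (f i j) s| ≤ C)
    (hh : Tendsto (dissipation f k kc L wstar x w) atTop (𝓝 0)) (i : ι) :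
    Tendsto (fun t => coordination L wstar w t i) atTop (𝓝 0) := by
  have hS_j j : Tendsto (fun t => k i j * pathError f x w t i j * deriv (f i j) (w t i))
      atTop (𝓝 0) := by
    obtain ⟨C, hC⟩ := hf' i j
    exact ZeroAtFilter.mul_boundedAtFilter (f := fun t => k i j * pathError f x w t i j)
      (by simpa [ZeroAtFilter] using
        (tendsto_pathError_of_tendsto_dissipation hk hh i j).const_mul (k i j))
      (boundedAtFilter_of_abs_le (.of_forall fun t => hC (w t i)))
  have hS := tendsto_finsetSum Finset.univ fun j _ => hS_j j
  rw [Finset.sum_const_zero] at hS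
  have hc : (fun t => coordination L wstar w t i) = fun t =>
      (speedCorrection f k kc L wstar x w t i
        - ∑ j, k i j * pathError f x w t i j * deriv (f i j) (w t i)) / kc := by
    ext t
    rw [speedCorrection]
    field_simp
    ring
  rw [hc]
  simpa using ((tendsto_speedCorrection_of_tendsto_dissipation hh i).sub hS).div_const kc

theorem tendsto_dotProduct_mulVec_of_tendsto_dissipation (hL : L.IsSymm) (hk : ∀ i j, 0 < k i j)
    (hkc : kc ≠ 0) (hf' : ∀ i j, ∃ C, ∀ s, |deriv (f i j) s| ≤ C)
    (hh : Tendsto (dissipation f k kc L wstar x w) atTop (𝓝 0)) :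
    Tendsto (fun t => (w t - wstar) ⬝ᵥ L *ᵥ (w t - wstar)) atTop (𝓝 0) := by
  have hc : Tendsto (coordination L wstar w) atTop (𝓝 0) :=
    tendsto_pi_nhds.2 (tendsto_coordination_of_tendsto_dissipation hk hkc hf' hh)
  exact L.tendsto_dotProduct_mulVec_of_tendsto_mulVec hL (by simpa [coordination] using hc.neg)

end CoordinatingGVF

theorem motion_coordination_on_paths_general
    (n N : ℕ)
    (f : Fin N → Fin n → ℝ → ℝ)
    (hf : ∀ i j, ContDiff ℝ 2 (f i j))
    (hbound : ∀ i j, ∃ C : ℝ, ∀ s : ℝ,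
      |deriv (f i j) s| ≤ C ∧ |deriv (deriv (f i j)) s| ≤ C)
    (k : Fin N → Fin n → ℝ) (hk : ∀ i j, 0 < k i j)
    (kc : ℝ) (hkc : 0 < kc)
    (G : SimpleGraph (Fin N)) [DecidableRel G.Adj]
    (E : ℕ) (D : Matrix (Fin N) (Fin E) ℝ)
    (hD : G.lapMatrix ℝ = D * D.transpose)
    (wstar : Fin N → ℝ)
    (x : ℝ → Fin N → Fin n → ℝ) (w : ℝ → Fin N → ℝ)
    -- the first `n` components of the coordinating guiding vector field `χ^i`
    (hode_x : ∀ (i : Fin N) (j : Fin n) (t : ℝ), 0 ≤ t →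
      HasDerivAt (fun s => x s i j)
        ((-1 : ℝ) ^ n * deriv (f i j) (w t i)
          - k i j * (x t i j - f i j (w t i))) t)
    -- the `(n+1)`-th component of `χ^i`, including the coordination term `kc · c^i(w)`
    (hode_w : ∀ (i : Fin N) (t : ℝ), 0 ≤ t →
      HasDerivAt (fun s => w s i)
        ((-1 : ℝ) ^ n
          + (∑ l, k i l * (x t i l - f i l (w t i)) * deriv (f i l) (w t i))
          + kc * (-(G.lapMatrix ℝ *ᵥ (fun m => w t m - wstar m)) i)) t) :
    -- (1) path following: `‖Φ^i(ξ^i(t))‖ → 0` for every robot `i`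
    (∀ i : Fin N,
      Tendsto (fun t => Real.sqrt (∑ j, (x t i j - f i j (w t i)) ^ 2))
        atTop (nhds 0)) ∧
    -- (2) coordination: `Dᵀ(w(t) - w*) → 0`
    (∀ e : Fin E,
      Tendsto (fun t => (D.transpose *ᵥ (fun m => w t m - wstar m)) e)
        atTop (nhds 0)) ∧
    -- in particular `w^i(t) - w^j(t) → Δ^{ij} = w*_i - w*_j` for every edge `(i,j)` of `G`
    (∀ i j : Fin N, G.Adj i j →
      Tendsto (fun t => w t i - w t j) atTop (nhds (wstar i - wstar j))) := by
  have hsol : IsCoordinatingGVFSolution ((-1) ^ n) f k kc (G.lapMatrix ℝ) wstar x w :=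
    ⟨fun i j => eventually_atTop.2 ⟨0, hode_x i j⟩,
      fun i => eventually_atTop.2 ⟨0, fun t ht => (hode_w i t ht).congr_deriv (add_assoc _ _ _)⟩⟩
  have hh := hsol.tendsto_dissipation hf hbound hk hkc hD G.lapMatrix_mulVec_const_eq_zero
  have hQ := tendsto_dotProduct_mulVec_of_tendsto_dissipation (G.isSymm_lapMatrix ℝ) hk hkc.ne'
    (fun i j => (hbound i j).imp fun _ h s => (h s).1) hh
  refine ⟨fun i => ?_, fun e => ?_, fun i j hij => ?_⟩
  · simpa [pathError] using (tendsto_finsetSum Finset.univ fun j _ =>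
      (tendsto_pathError_of_tendsto_dissipation hk hh i j).pow 2).sqrt
  · exact tendsto_zero_of_sq_le (.of_forall fun t => hD ▸ D.sq_transpose_mulVec_le _ e) hQ
  · rw [← tendsto_sub_nhds_zero_iff]
    refine tendsto_zero_of_sq_le (.of_forall fun t => ?_) (by simpa using hQ.const_mul 2)
    simpa [sub_sub_sub_comm] using
      G.sq_sub_le_two_mul_dotProduct_lapMatrix_mulVec hij (w t - wstar)

/-- **Theorem 1 (Motion coordination on paths).**
Each robot `i ∈ Fin N` has generalized coordinate `ξ^i = (x^i, w^i) ∈ ℝ^{n+1}`,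
desired path parameterized by `f i j : ℝ → ℝ`, path-following errors
`φ^i_j = x^i_j - f^i_j(w^i)`, gains `k i j > 0`, coordination gain `kc > 0`, and the
coupled autonomous system is driven by the coordinating guiding vector field
`χ^i = χ_pf^i + kc · c^i(w) e_{n+1}` with `c(w) = -L(w - w*)`, `L` the Laplacian of the
undirected connected communication graph `G`, and `D` an oriented incidence matrix
with `L = D Dᵀ`.  Then all path-following errors tend to `0` and
`Dᵀ(w(t) - w*) → 0`; in particular `w^i(t) - w^j(t) → w*_i - w*_j` for every edge. -/
theorem motion_coordination_on_paths
    (n N : ℕ) (hn : 1 ≤ n) (hN : 1 ≤ N)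
    (f : Fin N → Fin n → ℝ → ℝ)
    (hf : ∀ i j, ContDiff ℝ 2 (f i j))
    (hbound : ∀ i j, ∃ C : ℝ, ∀ s : ℝ,
      |deriv (f i j) s| ≤ C ∧ |deriv (deriv (f i j)) s| ≤ C)
    (k : Fin N → Fin n → ℝ) (hk : ∀ i j, 0 < k i j)
    (kc : ℝ) (hkc : 0 < kc)
    (G : SimpleGraph (Fin N)) [DecidableRel G.Adj] (hGconn : G.Connected)
    (E : ℕ) (D : Matrix (Fin N) (Fin E) ℝ)
    (hD : G.lapMatrix ℝ = D * D.transpose)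
    (wstar : Fin N → ℝ)
    (x : ℝ → Fin N → Fin n → ℝ) (w : ℝ → Fin N → ℝ)
    -- the first `n` components of the coordinating guiding vector field `χ^i`
    (hode_x : ∀ (i : Fin N) (j : Fin n) (t : ℝ), 0 ≤ t →
      HasDerivAt (fun s => x s i j)
        ((-1 : ℝ) ^ n * deriv (f i j) (w t i)
          - k i j * (x t i j - f i j (w t i))) t)
    -- the `(n+1)`-th component of `χ^i`, including the coordination term `kc · c^i(w)`
    (hode_w : ∀ (i : Fin N) (t : ℝ), 0 ≤ t →
      HasDerivAt (fun s => w s i)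
        ((-1 : ℝ) ^ n
          + (∑ l, k i l * (x t i l - f i l (w t i)) * deriv (f i l) (w t i))
          + kc * (-(G.lapMatrix ℝ *ᵥ (fun m => w t m - wstar m)) i)) t) :
    -- (1) path following: `‖Φ^i(ξ^i(t))‖ → 0` for every robot `i`
    (∀ i : Fin N,
      Tendsto (fun t => Real.sqrt (∑ j, (x t i j - f i j (w t i)) ^ 2))
        atTop (nhds 0)) ∧
    -- (2) coordination: `Dᵀ(w(t) - w*) → 0`
    (∀ e : Fin E,
      Tendsto (fun t => (D.transpose *ᵥ (fun m => w t m - wstar m)) e)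
        atTop (nhds 0)) ∧
    -- in particular `w^i(t) - w^j(t) → Δ^{ij} = w*_i - w*_j` for every edge `(i,j)` of `G`
    (∀ i j : Fin N, G.Adj i j →
      Tendsto (fun t => w t i - w t j) atTop (nhds (wstar i - wstar j))) :=
  motion_coordination_on_paths_general n N f hf hbound k hk kc hkc G E D hD wstar x w hode_x hode_w
end

section
/- Theorem 3 (Heading alignment under saturated angular control). Assume the planar field χ_p is continuously differentiable with ‖χ_p(t)‖² > γ for some γ > 0 and all t ≥ 0, and θ satisfies the saturated control law θ̇(t) = Sat_a^b(θ̇_d(t) − k_θ ĥ(t)ᵀ E χ̂_p(t)) with k_θ > 0 and a < 0 < b. If (1) the initial angle difference satisfies σ(0) ≠ π, and (2) σ(t) ∈ [0, π) at every upper-saturation time t and σ(t) ∈ (−π, 0] at every lower-saturation time t, then the angle difference vanishes asymptotically: σ(t) → 0 as t → ∞. -/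
open Filter Topology Real

/-- saturation function `Sat_a^b(x) = min(max(x,a),b)` -/
noncomputable def sat (a b x : ℝ) : ℝ := min (max x a) b

/-!
The Lyapunov function is `V = 1 - cos σ = 1 - ĥᵀχ̂_p`. Since `χ̂_p` turns at rate `θ̇_d` and `ĥ`
at rate `θ̇`, `V̇ = sin σ · (θ̇ - θ̇_d)`. Off saturation `θ̇ - θ̇_d = -k_θ sin σ`; at saturation the
sign conditions on `σ` make the clipping only slow the turn towards `χ̂_p`, never reverse it, so
in all cases `V̇ ≤ -k_θ sin² σ = -k_θ V (2 - V)`. Hence `V` is nonincreasing and stays below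
`V(0) < 2`, Grönwall gives `V(t) ≤ V(0) e^{-k_θ (2 - V(0)) t}`, and `1 - cos σ → 0` with
`σ ∈ (-π, π]` forces `σ → 0`.
-/

open Set

theorem mul_sat_sub_self_nonpos {a b x s : ℝ} (hab : a ≤ b) (hup : b < x → 0 ≤ s)
    (hlow : x < a → s ≤ 0) : s * (sat a b x - x) ≤ 0 := by
  rcases lt_or_ge b x with hbx | hxb
  · have : sat a b x = b := by rw [sat, max_eq_left (by linarith), min_eq_right hbx.le]
    nlinarith [hup hbx]
  rcases lt_or_ge x a with hxa | hax
  · have : sat a b x = a := by rw [sat, max_eq_right hxa.le, min_eq_left hab]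
    nlinarith [hlow hxa]
  · simp [sat, max_eq_left hax, min_eq_left hxb]

theorem hasDerivAt_sqrt_sq_add_sq {x y : ℝ → ℝ} {x' y' t : ℝ} (hx : HasDerivAt x x' t)
    (hy : HasDerivAt y y' t) (hpos : 0 < x t ^ 2 + y t ^ 2) :
    HasDerivAt (fun u => √(x u ^ 2 + y u ^ 2))
      ((x t * x' + y t * y') / √(x t ^ 2 + y t ^ 2)) t := by
  convert ((hx.fun_pow 2).fun_add (hy.fun_pow 2)).sqrt hpos.ne' using 1
  field_simp
  ring

theorem hasDerivAt_div_of_sq_eq {x N : ℝ → ℝ} {x' y y' t : ℝ} (hx : HasDerivAt x x' t)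
    (hN : HasDerivAt N ((x t * x' + y * y') / N t) t) (hN0 : N t ≠ 0)
    (hNsq : N t ^ 2 = x t ^ 2 + y ^ 2) :
    HasDerivAt (fun u => x u / N u) (-((x t * y' - y * x') / N t ^ 2) * (y / N t)) t := by
  refine (hx.fun_div hN hN0).congr_deriv ?_
  field_simp
  linear_combination x' * hNsq

theorem hasDerivAt_cos_mul_add_sin_mul {θ x y : ℝ → ℝ} {ω Ω t : ℝ} (hθ : HasDerivAt θ ω t)
    (hx : HasDerivAt x (-Ω * y t) t) (hy : HasDerivAt y (Ω * x t) t) :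
    HasDerivAt (fun u => cos (θ u) * x u + sin (θ u) * y u)
      ((sin (θ t) * x t - cos (θ t) * y t) * (Ω - ω)) t :=
  ((hθ.cos.fun_mul hx).fun_add (hθ.sin.fun_mul hy)).congr_deriv (by ring)

theorem hasDerivAt_heading_cos {χ₁ χ₂ θ : ℝ → ℝ} {d₁ d₂ ω t : ℝ} (h₁ : HasDerivAt χ₁ d₁ t)
    (h₂ : HasDerivAt χ₂ d₂ t) (hθ : HasDerivAt θ ω t) (hpos : 0 < χ₁ t ^ 2 + χ₂ t ^ 2) :
    HasDerivAt (fun u => (cos (θ u) * χ₁ u + sin (θ u) * χ₂ u) / √(χ₁ u ^ 2 + χ₂ u ^ 2))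
      ((sin (θ t) * χ₁ t - cos (θ t) * χ₂ t) / √(χ₁ t ^ 2 + χ₂ t ^ 2) *
        (-((χ₁ t / √(χ₁ t ^ 2 + χ₂ t ^ 2)) * (-d₂) + (χ₂ t / √(χ₁ t ^ 2 + χ₂ t ^ 2)) * d₁) /
          √(χ₁ t ^ 2 + χ₂ t ^ 2) - ω)) t := by
  set N := fun u => √(χ₁ u ^ 2 + χ₂ u ^ 2)
  have hN := hasDerivAt_sqrt_sq_add_sq h₁ h₂ hpos
  have hN0 : N t ≠ 0 := (sqrt_pos.2 hpos).ne'
  have hNsq : N t ^ 2 = χ₁ t ^ 2 + χ₂ t ^ 2 := sq_sqrt hpos.le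
  have hx := hasDerivAt_div_of_sq_eq h₁ hN hN0 hNsq
  have hy := hasDerivAt_div_of_sq_eq h₂ (y := χ₁ t) (y' := d₁) (by rwa [add_comm])
    hN0 (by rw [hNsq, add_comm])
  convert hasDerivAt_cos_mul_add_sin_mul hθ hx (hy.congr_deriv (by ring)) using 1
  · ext u
    ring
  · field_simp
    ring

theorem le_mul_exp_of_hasDerivAt_le {V V' : ℝ → ℝ} {K : ℝ}
    (hV : ∀ t, 0 ≤ t → HasDerivAt V (V' t) t) (hV' : ∀ t, 0 ≤ t → V' t ≤ K * V t)
    {t : ℝ} (ht : 0 ≤ t) : V t ≤ V 0 * exp (K * t) := by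
  have hcont : ContinuousOn V (Icc 0 t) := fun u hu =>
    (hV u hu.1).continuousAt.continuousWithinAt
  have := le_gronwallBound_of_liminf_deriv_right_le hcont
    (fun u hu r hr => (hV u hu.1).hasDerivWithinAt.liminf_right_slope_le hr) le_rfl
    (fun u hu => (add_zero (K * V u)).symm ▸ hV' u hu.1) t ⟨ht, le_rfl⟩
  rwa [gronwallBound_ε0, sub_zero] at this

theorem tendsto_zero_of_hasDerivAt_le_neg_mul_mul_sub {V V' : ℝ → ℝ} {k M : ℝ} (hk : 0 < k)
    (hV : ∀ t, 0 ≤ t → HasDerivAt V (V' t) t)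
    (hV' : ∀ t, 0 ≤ t → V' t ≤ -k * V t * (M - V t))
    (hmem : ∀ t, 0 ≤ t → V t ∈ Icc 0 M) (h0 : V 0 < M) : Tendsto V atTop (𝓝 0) := by
  have hanti : AntitoneOn V (Ici 0) := by
    refine antitoneOn_of_hasDerivWithinAt_nonpos (convex_Ici 0)
      (fun t ht => (hV t ht).continuousAt.continuousWithinAt)
      (fun t ht => (hV t (interior_subset ht)).hasDerivWithinAt) fun t ht => ?_
    have := hmem t (interior_subset ht)
    nlinarith [hV' t (interior_subset ht),
      mul_nonneg (mul_nonneg hk.le this.1) (sub_nonneg.2 this.2)]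
  have hdecay : ∀ t, 0 ≤ t → V t ≤ V 0 * exp (-(k * (M - V 0)) * t) := by
    refine fun t => le_mul_exp_of_hasDerivAt_le hV fun t ht => ?_
    have hle : V t ≤ V 0 := hanti self_mem_Ici ht ht
    nlinarith [hV' t ht, mul_nonneg (mul_nonneg hk.le (hmem t ht).1) (sub_nonneg.2 hle)]
  have hlim : Tendsto (fun t => V 0 * exp (-(k * (M - V 0)) * t)) atTop (𝓝 0) := by
    simpa using (tendsto_exp_atBot.comp
      (tendsto_id.const_mul_atTop_of_neg (by nlinarith : -(k * (M - V 0)) < 0))).const_mul (V 0)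
  refine tendsto_of_tendsto_of_tendsto_of_le_of_le' tendsto_const_nhds hlim ?_ ?_
  · filter_upwards [eventually_ge_atTop 0] with t ht using (hmem t ht).1
  · filter_upwards [eventually_ge_atTop 0] with t ht using hdecay t ht

theorem neg_one_lt_cos_of_abs_lt {x : ℝ} (hx : |x| < π) : -1 < cos x := by
  simpa [cos_pi, cos_abs] using cos_lt_cos_of_nonneg_of_le_pi (abs_nonneg x) le_rfl hx

theorem tendsto_zero_of_tendsto_one_sub_cos {ι : Type*} {l : Filter ι} {σ : ι → ℝ}
    (hσ : ∀ᶠ i in l, |σ i| ≤ π) (h : Tendsto (fun i => 1 - cos (σ i)) l (𝓝 0)) :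
    Tendsto σ l (𝓝 0) := by
  have hsq : Tendsto (fun i => σ i ^ 2) l (𝓝 0) := by
    refine squeeze_zero' (Eventually.of_forall fun i => sq_nonneg _) ?_
      (by simpa using h.const_mul (π ^ 2 / 2))
    filter_upwards [hσ] with i hi
    calc σ i ^ 2 = π ^ 2 / 2 * (2 / π ^ 2 * σ i ^ 2) := by field_simp
      _ ≤ π ^ 2 / 2 * (1 - cos (σ i)) := by gcongr; linarith [cos_le_one_sub_mul_cos_sq hi]
  rw [tendsto_zero_iff_abs_tendsto_zero]
  simpa [Function.comp_def, sqrt_sq_eq_abs] using (continuous_sqrt.tendsto 0).comp hsq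

/-- **Theorem 3 (Heading alignment under saturated angular control).**
`(χ₁, χ₂)` is the planar guiding vector field along the trajectory (C¹, with squared
norm bounded below by `γ > 0`), `nrm` its norm, `θ` the yaw angle with heading
`ĥ = (cos θ, sin θ)`, `s = ĥᵀEχ̂_p` (with `E` the 90° rotation), `θd` the change rate
of the vector-field orientation, and `σ` the signed angle in `(-π, π]` from `χ̂_p` to
`ĥ` (so `sin σ = s` and `cos σ = ĥᵀχ̂_p`).  Under the saturated control law
`θ̇ = Sat_a^b(θd - k_θ s)`, if `σ(0) ≠ π` and the saturation-period conditions hold,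
then `σ(t) → 0`. -/
theorem heading_alignment_saturated
    (χ₁ χ₂ : ℝ → ℝ) (hχ₁ : ContDiff ℝ 1 χ₁) (hχ₂ : ContDiff ℝ 1 χ₂)
    (γ : ℝ) (hγ : 0 < γ)
    (hlow : ∀ t : ℝ, 0 ≤ t → γ < χ₁ t ^ 2 + χ₂ t ^ 2)
    (θ σ : ℝ → ℝ)
    (kθ a b : ℝ) (hkθ : 0 < kθ) (ha : a < 0) (hb : 0 < b)
    (nrm s θd : ℝ → ℝ)
    (hnrm : ∀ t, nrm t = Real.sqrt (χ₁ t ^ 2 + χ₂ t ^ 2))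
    -- `s(t) = ĥ(t)ᵀ E χ̂_p(t)`
    (hs : ∀ t, s t = (Real.sin (θ t) * χ₁ t - Real.cos (θ t) * χ₂ t) / nrm t)
    -- `θd(t) = -χ̂_p(t)ᵀ E χ̇_p(t) / ‖χ_p(t)‖`
    (hθd : ∀ t, θd t =
      -((χ₁ t / nrm t) * (-(deriv χ₂ t)) + (χ₂ t / nrm t) * deriv χ₁ t) / nrm t)
    -- `σ` is the signed angle in `(-π, π]` directed from `χ̂_p` to `ĥ`
    (hσ : ∀ t : ℝ, 0 ≤ t → σ t ∈ Set.Ioc (-π) π ∧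
      Real.sin (σ t) = s t ∧
      Real.cos (σ t) = (Real.cos (θ t) * χ₁ t + Real.sin (θ t) * χ₂ t) / nrm t)
    -- saturated angular control law
    (hctrl : ∀ t : ℝ, 0 ≤ t → HasDerivAt θ (sat a b (θd t - kθ * s t)) t)
    -- (1) initial angle difference
    (hinit : σ 0 ≠ π)
    -- (2) saturation-period conditions
    (hupper : ∀ t : ℝ, 0 ≤ t → b < θd t - kθ * s t → σ t ∈ Set.Ico 0 π)
    (hlower : ∀ t : ℝ, 0 ≤ t → θd t - kθ * s t < a → σ t ∈ Set.Ioc (-π) 0) :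
    Tendsto σ atTop (nhds 0) := by
  set u := fun t => sat a b (θd t - kθ * s t)
  set V := fun t => 1 - (cos (θ t) * χ₁ t + sin (θ t) * χ₂ t) / nrm t
  have hVσ : ∀ t, 0 ≤ t → V t = 1 - cos (σ t) := fun t ht => by rw [(hσ t ht).2.2]
  have hV : ∀ t, 0 ≤ t → HasDerivAt V (s t * (u t - θd t)) t := by
    intro t ht
    have hcos := hasDerivAt_heading_cos (hχ₁.differentiable one_ne_zero t).hasDerivAt
      (hχ₂.differentiable one_ne_zero t).hasDerivAt (hctrl t ht) (hγ.trans (hlow t ht))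
    simp only [← hnrm, ← hs, ← hθd] at hcos
    exact (hcos.const_sub 1).congr_deriv (by ring)
  have hV' : ∀ t, 0 ≤ t → s t * (u t - θd t) ≤ -kθ * V t * (2 - V t) := by
    intro t ht
    have hsq : s t ^ 2 = V t * (2 - V t) := by
      rw [hVσ t ht, ← (hσ t ht).2.1]
      linear_combination sin_sq_add_cos_sq (σ t)
    have hsat := mul_sat_sub_self_nonpos (s := s t) (x := θd t - kθ * s t) (by linarith)
      (fun h => (hσ t ht).2.1 ▸
        sin_nonneg_of_nonneg_of_le_pi (hupper t ht h).1 (hupper t ht h).2.le)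
      (fun h => (hσ t ht).2.1 ▸
        sin_nonpos_of_nonpos_of_neg_pi_le (hlower t ht h).2 (hlower t ht h).1.le)
    linear_combination hsat - kθ * hsq
  have hVmem : ∀ t, 0 ≤ t → V t ∈ Icc 0 2 := fun t ht => by
    rw [hVσ t ht]; constructor <;> linarith [neg_one_le_cos (σ t), cos_le_one (σ t)]
  have hV0 : V 0 < 2 := by
    have hσ0 := (hσ 0 le_rfl).1
    have := neg_one_lt_cos_of_abs_lt (abs_lt.2 ⟨hσ0.1, lt_of_le_of_ne hσ0.2 hinit⟩)
    rw [hVσ 0 le_rfl]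
    linarith
  refine tendsto_zero_of_tendsto_one_sub_cos ?_ ?_
  · filter_upwards [eventually_ge_atTop 0] with t ht
    exact abs_le.2 ⟨(hσ t ht).1.1.le, (hσ t ht).1.2⟩
  · refine (tendsto_zero_of_hasDerivAt_le_neg_mul_mul_sub hkθ hV hV' hVmem hV0).congr' ?_
    filter_upwards [eventually_ge_atTop 0] with t ht using hVσ t ht
end

section
/- Composite error dynamics for path coordination. Let ξ : I → ℝ^{(n+1)N} be a differentiable function on an interval I satisfying ξ̇^i(t) = χ^i(ξ^i(t), w(t)) for all i, where w(t) collects the (n+1)-th components. Then along this solution: (i) d/dt Φ(ξ(t)) = −K Φ − 𝔉(w) 𝔉(w)ᵀ K Φ + k_c 𝔉(w) L w̃; (ii) d/dt w(t) = (−1)^n 1_N + 𝔉(w)ᵀ K Φ − k_c L w̃, where 1_N ∈ ℝ^N is the all-ones vector; consequently (iii) d/dt (Dᵀ w̃(t)) = Dᵀ 𝔉(w)ᵀ K Φ − k_c Dᵀ L w̃ (using Dᵀ1_N = 0 for the incidence matrix of a graph). -/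
open Filter Topology Matrix

/-- stacked path-following error `Φ ∈ ℝ^{nN}`, indexed by robot–coordinate pairs -/
noncomputable def stackPhi (n N : ℕ) (f : Fin N → Fin n → ℝ → ℝ)
    (x : Fin N → Fin n → ℝ) (w : Fin N → ℝ) : Fin N × Fin n → ℝ :=
  fun p => x p.1 p.2 - f p.1 p.2 (w p.1)

/-- block-diagonal gain matrix `K = blockdiag(K^1, …, K^N)` -/
noncomputable def stackK (n N : ℕ) (k : Fin N → Fin n → ℝ) :
    Matrix (Fin N × Fin n) (Fin N × Fin n) ℝ :=
  Matrix.diagonal fun p => k p.1 p.2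

/-- block-diagonal matrix `𝔉(w) = blockdiag(f^1'(w^1), …, f^N'(w^N)) ∈ ℝ^{nN×N}` -/
noncomputable def stackF (n N : ℕ) (f : Fin N → Fin n → ℝ → ℝ) (w : Fin N → ℝ) :
    Matrix (Fin N × Fin n) (Fin N) ℝ :=
  fun p i => if p.1 = i then deriv (f p.1 p.2) (w p.1) else 0

/-!
Both error equations are the chain rule applied to `Φ^i_j = x^i_j - f^i_j(w^i)`: in stacked form
the position equations read `ẋ = (-1)^n 𝔉 1 - KΦ`, the parameter equations read
`ẇ = (-1)^n 1 + 𝔉ᵀKΦ - k_c L w̃`, and `Φ̇ = ẋ - 𝔉 ẇ`, which is pure matrix algebra.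
For (iii), `L = D Dᵀ` and `L 1 = 0` give `‖Dᵀ 1‖² = 1ᵀ L 1 = 0`, so the common drift `(-1)^n 1` drops out.
-/

theorem Matrix.transpose_mulVec_const_eq_zero_of_lapMatrix_eq {V R : Type*} [Fintype V]
    [DecidableEq V] [Field R] [LinearOrder R] [IsStrictOrderedRing R] {E : Type*} [Fintype E]
    (G : SimpleGraph V) [DecidableRel G.Adj] {D : Matrix V E R}
    (hD : G.lapMatrix R = D * Dᵀ) : Dᵀ *ᵥ (fun _ => 1) = 0 := by
  have h := ker_mulVecLin_transpose_mul_self Dᵀ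
  rw [transpose_transpose, ← hD] at h
  have hL : (fun _ => (1 : R)) ∈ LinearMap.ker (G.lapMatrix R).mulVecLin :=
    G.lapMatrix_mulVec_const_eq_zero
  rwa [h] at hL

theorem hasDerivAt_mulVec_apply {𝕜 ι κ : Type*} [NontriviallyNormedField 𝕜] [Fintype κ]
    (A : Matrix ι κ 𝕜) {v : 𝕜 → κ → 𝕜} {v' : κ → 𝕜} {t : 𝕜} (hv : ∀ m, HasDerivAt (fun s => v s m) (v' m) t)
    (e : ι) : HasDerivAt (fun s => (A *ᵥ v s) e) ((A *ᵥ v') e) t :=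
  HasDerivAt.fun_sum fun m _ => (hv m).const_mul (A e m)

section Stacked

variable {n N : ℕ} {f : Fin N → Fin n → ℝ → ℝ}

theorem stackK_mulVec_stackPhi_apply (k : Fin N → Fin n → ℝ) (x : Fin N → Fin n → ℝ)
    (w : Fin N → ℝ) (p : Fin N × Fin n) :
    (stackK n N k *ᵥ stackPhi n N f x w) p = k p.1 p.2 * (x p.1 p.2 - f p.1 p.2 (w p.1)) := by
  simp [stackK, stackPhi, mulVec_diagonal]

theorem stackF_mulVec_apply (w v : Fin N → ℝ) (p : Fin N × Fin n) :
    (stackF n N f w *ᵥ v) p = deriv (f p.1 p.2) (w p.1) * v p.1 := by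
  simp [stackF, mulVec, dotProduct, ite_mul]

theorem stackF_transpose_mulVec_apply (w : Fin N → ℝ) (v : Fin N × Fin n → ℝ) (i : Fin N) :
    ((stackF n N f w)ᵀ *ᵥ v) i = ∑ l, v (i, l) * deriv (f i l) (w i) := by
  simp only [mulVec, dotProduct, transpose_apply, stackF, ite_mul, zero_mul]
  rw [Fintype.sum_prod_type, Finset.sum_eq_single i (fun b _ hb => by simp [hb]) (by simp)]
  simp [mul_comm]

theorem hasDerivAt_stackPhi (hf : ∀ i j, Differentiable ℝ (f i j))
    {x : ℝ → Fin N → Fin n → ℝ} {w : ℝ → Fin N → ℝ} {x' : Fin N × Fin n → ℝ} {w' : Fin N → ℝ}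
    {t : ℝ} (hx : ∀ p : Fin N × Fin n, HasDerivAt (fun s => x s p.1 p.2) (x' p) t)
    (hw : ∀ i, HasDerivAt (fun s => w s i) (w' i) t) (p : Fin N × Fin n) :
    HasDerivAt (fun s => stackPhi n N f (x s) (w s) p) ((x' - stackF n N f (w t) *ᵥ w') p) t := by
  have hfw := ((hf p.1 p.2) (w t p.1)).hasDerivAt.comp t (hw p.1)
  rw [Pi.sub_apply, stackF_mulVec_apply]
  exact (hx p).sub hfw

end Stacked

theorem composite_error_dynamics_paths_general
    (n N : ℕ)
    (f : Fin N → Fin n → ℝ → ℝ) (hf : ∀ i j, ContDiff ℝ 2 (f i j))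
    (k : Fin N → Fin n → ℝ)
    (kc : ℝ)
    (G : SimpleGraph (Fin N)) [DecidableRel G.Adj]
    (E : ℕ) (D : Matrix (Fin N) (Fin E) ℝ)
    (hD : G.lapMatrix ℝ = D * D.transpose)
    (wstar : Fin N → ℝ)
    (I : Set ℝ)
    (x : ℝ → Fin N → Fin n → ℝ) (w : ℝ → Fin N → ℝ)
    -- the first `n` components of `χ^i`
    (hode_x : ∀ (i : Fin N) (j : Fin n), ∀ t ∈ I,
      HasDerivAt (fun s => x s i j)
        ((-1 : ℝ) ^ n * deriv (f i j) (w t i)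
          - k i j * (x t i j - f i j (w t i))) t)
    -- the `(n+1)`-th component of `χ^i`
    (hode_w : ∀ (i : Fin N), ∀ t ∈ I,
      HasDerivAt (fun s => w s i)
        ((-1 : ℝ) ^ n
          + (∑ l, k i l * (x t i l - f i l (w t i)) * deriv (f i l) (w t i))
          + kc * (-(G.lapMatrix ℝ *ᵥ (fun m => w t m - wstar m)) i)) t) :
    -- (i) `d/dt Φ = -KΦ - 𝔉𝔉ᵀKΦ + k_c 𝔉 L w̃`
    (∀ (p : Fin N × Fin n), ∀ t ∈ I,
      HasDerivAt (fun s => stackPhi n N f (x s) (w s) p)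
        ((-(stackK n N k *ᵥ stackPhi n N f (x t) (w t))
          - (stackF n N f (w t) * (stackF n N f (w t)).transpose) *ᵥ
              (stackK n N k *ᵥ stackPhi n N f (x t) (w t))
          + kc • (stackF n N f (w t) *ᵥ
              (G.lapMatrix ℝ *ᵥ (fun m => w t m - wstar m)))) p) t) ∧
    -- (ii) `d/dt w = (-1)^n 1_N + 𝔉ᵀKΦ - k_c L w̃`
    (∀ (i : Fin N), ∀ t ∈ I,
      HasDerivAt (fun s => w s i)
        (((-1 : ℝ) ^ n • (1 : Fin N → ℝ)
          + (stackF n N f (w t)).transpose *ᵥ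
              (stackK n N k *ᵥ stackPhi n N f (x t) (w t))
          - kc • (G.lapMatrix ℝ *ᵥ (fun m => w t m - wstar m))) i) t) ∧
    -- (iii) `d/dt (Dᵀ w̃) = Dᵀ𝔉ᵀKΦ - k_c Dᵀ L w̃`
    (∀ (e : Fin E), ∀ t ∈ I,
      HasDerivAt (fun s => (D.transpose *ᵥ (fun m => w s m - wstar m)) e)
        ((D.transpose *ᵥ ((stackF n N f (w t)).transpose *ᵥ
              (stackK n N k *ᵥ stackPhi n N f (x t) (w t)))
          - kc • (D.transpose *ᵥ
              (G.lapMatrix ℝ *ᵥ (fun m => w t m - wstar m)))) e) t) := by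
  have hf' : ∀ i j, Differentiable ℝ (f i j) := fun i j => (hf i j).differentiable (by norm_num)
  have hw : ∀ (i : Fin N), ∀ t ∈ I,
      HasDerivAt (fun s => w s i)
        (((-1 : ℝ) ^ n • (1 : Fin N → ℝ)
          + (stackF n N f (w t)).transpose *ᵥ
              (stackK n N k *ᵥ stackPhi n N f (x t) (w t))
          - kc • (G.lapMatrix ℝ *ᵥ (fun m => w t m - wstar m))) i) t := by
    intro i t ht
    refine (hode_w i t ht).congr_deriv ?_
    simp only [Pi.add_apply, Pi.sub_apply, Pi.smul_apply, Pi.one_apply, smul_eq_mul,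
      mul_one, stackF_transpose_mulVec_apply, stackK_mulVec_stackPhi_apply]
    ring
  refine ⟨fun p t ht => ?_, hw, fun e t ht => ?_⟩
  · have hx : ∀ q : Fin N × Fin n, HasDerivAt (fun s => x s q.1 q.2)
        (((-1 : ℝ) ^ n • (stackF n N f (w t) *ᵥ 1)
          - stackK n N k *ᵥ stackPhi n N f (x t) (w t)) q) t := fun q =>
      (hode_x q.1 q.2 t ht).congr_deriv (by
        simp [stackF_mulVec_apply, stackK_mulVec_stackPhi_apply])
    refine (hasDerivAt_stackPhi hf' hx (fun i => hw i t ht) p).congr_deriv ?_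
    refine congrFun ?_ p
    rw [← mulVec_mulVec]
    simp only [mulVec_add, mulVec_sub, mulVec_smul]
    abel
  · have hD1 := transpose_mulVec_const_eq_zero_of_lapMatrix_eq G hD
    refine (hasDerivAt_mulVec_apply Dᵀ (fun m => (hw m t ht).sub_const (wstar m)) e).congr_deriv ?_
    rw [mulVec_sub, mulVec_add, mulVec_smul, mulVec_smul, Pi.one_def, hD1, smul_zero, zero_add]

/-- **Composite error dynamics for path coordination.**
Along any solution of the coupled system `ξ̇^i = χ^i(ξ^i, w)` on an interval `I`:
(i) `d/dt Φ = -KΦ - 𝔉𝔉ᵀKΦ + k_c 𝔉 L w̃`;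
(ii) `d/dt w = (-1)^n 1 + 𝔉ᵀKΦ - k_c L w̃`;
(iii) `d/dt (Dᵀ w̃) = Dᵀ𝔉ᵀKΦ - k_c Dᵀ L w̃`. -/
theorem composite_error_dynamics_paths
    (n N : ℕ) (hn : 1 ≤ n) (hN : 1 ≤ N)
    (f : Fin N → Fin n → ℝ → ℝ) (hf : ∀ i j, ContDiff ℝ 2 (f i j))
    (k : Fin N → Fin n → ℝ) (hk : ∀ i j, 0 < k i j)
    (kc : ℝ) (hkc : 0 < kc)
    (G : SimpleGraph (Fin N)) [DecidableRel G.Adj]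
    (E : ℕ) (D : Matrix (Fin N) (Fin E) ℝ)
    (hD : G.lapMatrix ℝ = D * D.transpose)
    (wstar : Fin N → ℝ)
    (I : Set ℝ)
    (x : ℝ → Fin N → Fin n → ℝ) (w : ℝ → Fin N → ℝ)
    -- the first `n` components of `χ^i`
    (hode_x : ∀ (i : Fin N) (j : Fin n), ∀ t ∈ I,
      HasDerivAt (fun s => x s i j)
        ((-1 : ℝ) ^ n * deriv (f i j) (w t i)
          - k i j * (x t i j - f i j (w t i))) t)
    -- the `(n+1)`-th component of `χ^i`
    (hode_w : ∀ (i : Fin N), ∀ t ∈ I,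
      HasDerivAt (fun s => w s i)
        ((-1 : ℝ) ^ n
          + (∑ l, k i l * (x t i l - f i l (w t i)) * deriv (f i l) (w t i))
          + kc * (-(G.lapMatrix ℝ *ᵥ (fun m => w t m - wstar m)) i)) t) :
    -- (i) `d/dt Φ = -KΦ - 𝔉𝔉ᵀKΦ + k_c 𝔉 L w̃`
    (∀ (p : Fin N × Fin n), ∀ t ∈ I,
      HasDerivAt (fun s => stackPhi n N f (x s) (w s) p)
        ((-(stackK n N k *ᵥ stackPhi n N f (x t) (w t))
          - (stackF n N f (w t) * (stackF n N f (w t)).transpose) *ᵥ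
              (stackK n N k *ᵥ stackPhi n N f (x t) (w t))
          + kc • (stackF n N f (w t) *ᵥ
              (G.lapMatrix ℝ *ᵥ (fun m => w t m - wstar m)))) p) t) ∧
    -- (ii) `d/dt w = (-1)^n 1_N + 𝔉ᵀKΦ - k_c L w̃`
    (∀ (i : Fin N), ∀ t ∈ I,
      HasDerivAt (fun s => w s i)
        (((-1 : ℝ) ^ n • (1 : Fin N → ℝ)
          + (stackF n N f (w t)).transpose *ᵥ
              (stackK n N k *ᵥ stackPhi n N f (x t) (w t))
          - kc • (G.lapMatrix ℝ *ᵥ (fun m => w t m - wstar m))) i) t) ∧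
    -- (iii) `d/dt (Dᵀ w̃) = Dᵀ𝔉ᵀKΦ - k_c Dᵀ L w̃`
    (∀ (e : Fin E), ∀ t ∈ I,
      HasDerivAt (fun s => (D.transpose *ᵥ (fun m => w s m - wstar m)) e)
        ((D.transpose *ᵥ ((stackF n N f (w t)).transpose *ᵥ
              (stackK n N k *ᵥ stackPhi n N f (x t) (w t)))
          - kc • (D.transpose *ᵥ
              (G.lapMatrix ℝ *ᵥ (fun m => w t m - wstar m)))) e) t) :=
  composite_error_dynamics_paths_general n N f hf k kc G E D hD wstar I x w hode_x hode_w
end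

section
/- Pointwise Lyapunov decrease under the saturated heading control law. In the setting of the saturated heading control law θ̇(t) = Sat_a^b(θ̇_d(t) − k_θ ĥ(t)ᵀEχ̂_p(t)) with k_θ > 0, a < 0 < b, define V(t) = ½‖ĥ(t) − χ̂_p(t)‖². Then: (i) V̇(t) = (θ̇(t) − θ̇_d(t)) · ĥ(t)ᵀEχ̂_p(t) for all t; (ii) at every time t at which no saturation occurs (i.e., a ≤ θ̇_d(t) − k_θĥ(t)ᵀEχ̂_p(t) ≤ b), one has V̇(t) = −k_θ (ĥ(t)ᵀEχ̂_p(t))² ≤ 0; (iii) at every upper-saturation time t with ĥ(t)ᵀEχ̂_p(t) ≥ 0 (i.e., σ(t) ∈ [0, π]), and at every lower-saturation time t with ĥ(t)ᵀEχ̂_p(t) ≤ 0 (i.e., σ(t) ∈ [−π, 0]), one has V̇(t) ≤ −k_θ (ĥ(t)ᵀEχ̂_p(t))² ≤ 0. -/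
open Filter Topology Real

section Saturation

variable {a b x : ℝ}

theorem sat_eq_self (ha : a ≤ x) (hb : x ≤ b) : sat a b x = x := by
  rw [sat, max_eq_left ha, min_eq_left hb]

theorem sat_le_self (ha : a ≤ x) : sat a b x ≤ x := by
  rw [sat, max_eq_left ha]
  exact min_le_left x b

theorem self_le_sat (hb : x ≤ b) : x ≤ sat a b x :=
  le_min (le_max_left x a) hb

end Saturation

theorem sub_mul_le_neg_mul_sq {u c k s : ℝ} (h : (u - (c - k * s)) * s ≤ 0) :
    (u - c) * s ≤ -k * s ^ 2 := by
  linarith [show (u - c) * s = (u - (c - k * s)) * s - k * s ^ 2 by ring]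

section Normalization

variable {f₁ f₂ : ℝ → ℝ} {d₁ d₂ t : ℝ}

theorem hasDerivAt_sqrt_normSq (h₁ : HasDerivAt f₁ d₁ t) (h₂ : HasDerivAt f₂ d₂ t)
    (hq : 0 < f₁ t ^ 2 + f₂ t ^ 2) :
    HasDerivAt (fun u => √(f₁ u ^ 2 + f₂ u ^ 2))
      ((f₁ t * d₁ + f₂ t * d₂) / √(f₁ t ^ 2 + f₂ t ^ 2)) t := by
  refine (((h₁.fun_pow 2).fun_add (h₂.fun_pow 2)).sqrt hq.ne').congr_deriv ?_
  field_simp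
  ring

/-- The unit vector `f / ‖f‖` turns with angular rate `(f₁ ḟ₂ - f₂ ḟ₁) / ‖f‖²`. -/
theorem hasDerivAt_fst_div_sqrt_normSq (h₁ : HasDerivAt f₁ d₁ t) (h₂ : HasDerivAt f₂ d₂ t)
    (hq : 0 < f₁ t ^ 2 + f₂ t ^ 2) :
    HasDerivAt (fun u => f₁ u / √(f₁ u ^ 2 + f₂ u ^ 2))
      (-((f₁ t * d₂ - f₂ t * d₁) / (f₁ t ^ 2 + f₂ t ^ 2)) *
        (f₂ t / √(f₁ t ^ 2 + f₂ t ^ 2))) t := by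
  have hn : √(f₁ t ^ 2 + f₂ t ^ 2) ≠ 0 := (sqrt_pos.2 hq).ne'
  refine (h₁.fun_div (hasDerivAt_sqrt_normSq h₁ h₂ hq) hn).congr_deriv ?_
  have hsq : √(f₁ t ^ 2 + f₂ t ^ 2) ^ 2 = f₁ t ^ 2 + f₂ t ^ 2 := sq_sqrt hq.le
  field_simp
  rw [hsq]
  ring

theorem hasDerivAt_snd_div_sqrt_normSq (h₁ : HasDerivAt f₁ d₁ t) (h₂ : HasDerivAt f₂ d₂ t)
    (hq : 0 < f₁ t ^ 2 + f₂ t ^ 2) :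
    HasDerivAt (fun u => f₂ u / √(f₁ u ^ 2 + f₂ u ^ 2))
      ((f₁ t * d₂ - f₂ t * d₁) / (f₁ t ^ 2 + f₂ t ^ 2) *
        (f₁ t / √(f₁ t ^ 2 + f₂ t ^ 2))) t := by
  have h := hasDerivAt_fst_div_sqrt_normSq h₂ h₁ (by rwa [add_comm])
  simp only [add_comm (f₂ _ ^ 2)] at h
  exact h.congr_deriv (by ring)

end Normalization

/-- With `ĥ = (cos θ, sin θ)` and `u` rotating at rate `ω_d`, `½‖ĥ - u‖²` has derivative
`(θ̇ - ω_d) ĥᵀE u`. -/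
theorem hasDerivAt_half_sq_dist_heading {θ u₁ u₂ : ℝ → ℝ} {ω ωd t : ℝ}
    (hθ : HasDerivAt θ ω t) (hu₁ : HasDerivAt u₁ (-ωd * u₂ t) t)
    (hu₂ : HasDerivAt u₂ (ωd * u₁ t) t) :
    HasDerivAt (fun τ => 1 / 2 * ((cos (θ τ) - u₁ τ) ^ 2 + (sin (θ τ) - u₂ τ) ^ 2))
      ((ω - ωd) * (sin (θ t) * u₁ t - cos (θ t) * u₂ t)) t := by
  refine (((((hθ.cos).fun_sub hu₁).fun_pow 2).fun_add
    (((hθ.sin).fun_sub hu₂).fun_pow 2)).const_mul (1 / 2)).congr_deriv ?_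
  push_cast
  ring

/-- **Pointwise Lyapunov decrease under the saturated heading control law.**
With `V = ½‖ĥ - χ̂_p‖²` and `V̇` the expression `(Sat_a^b(θd - k_θ s) - θd)·s`
(where `s = ĥᵀEχ̂_p`):
(i) `V̇` is the derivative of `V`: `V̇(t) = (θ̇(t) - θ̇_d(t))·ĥᵀEχ̂_p`;
(ii) with no saturation, `V̇ = -k_θ s² ≤ 0`;
(iii) at upper-saturation times with `s ≥ 0` (i.e. `σ ∈ [0, π]`) and at
lower-saturation times with `s ≤ 0` (i.e. `σ ∈ [-π, 0]`), `V̇ ≤ -k_θ s² ≤ 0`. -/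
theorem pointwise_lyapunov_decrease_saturated
    (χ₁ χ₂ : ℝ → ℝ) (hχ₁ : ContDiff ℝ 1 χ₁) (hχ₂ : ContDiff ℝ 1 χ₂)
    (hnz : ∀ t : ℝ, 0 < χ₁ t ^ 2 + χ₂ t ^ 2)
    (θ : ℝ → ℝ)
    (kθ a b : ℝ) (hkθ : 0 < kθ) (ha : a < 0) (hb : 0 < b)
    (nrm s θd V Vd : ℝ → ℝ)
    (hnrm : ∀ t, nrm t = Real.sqrt (χ₁ t ^ 2 + χ₂ t ^ 2))
    -- `s(t) = ĥ(t)ᵀ E χ̂_p(t)`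
    (hs : ∀ t, s t = (Real.sin (θ t) * χ₁ t - Real.cos (θ t) * χ₂ t) / nrm t)
    -- `θd(t) = -χ̂_p(t)ᵀ E χ̇_p(t) / ‖χ_p(t)‖`
    (hθd : ∀ t, θd t =
      -((χ₁ t / nrm t) * (-(deriv χ₂ t)) + (χ₂ t / nrm t) * deriv χ₁ t) / nrm t)
    -- `V(t) = ½ ‖ĥ(t) - χ̂_p(t)‖²`
    (hV : ∀ t, V t = (1 / 2) *
      ((Real.cos (θ t) - χ₁ t / nrm t) ^ 2 + (Real.sin (θ t) - χ₂ t / nrm t) ^ 2))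
    -- `Vd(t) = (θ̇(t) - θ̇_d(t)) · ĥ(t)ᵀEχ̂_p(t)` with `θ̇` given by the control law
    (hVd : ∀ t, Vd t = (sat a b (θd t - kθ * s t) - θd t) * s t)
    -- saturated angular control law
    (hctrl : ∀ t : ℝ, 0 ≤ t → HasDerivAt θ (sat a b (θd t - kθ * s t)) t) :
    -- (i) `Vd` is the derivative of `V`
    (∀ t : ℝ, 0 ≤ t → HasDerivAt V (Vd t) t) ∧
    -- (ii) no saturation: `V̇ = -k_θ s² ≤ 0`
    (∀ t : ℝ, 0 ≤ t → a ≤ θd t - kθ * s t → θd t - kθ * s t ≤ b →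
      Vd t = -kθ * (s t) ^ 2 ∧ Vd t ≤ 0) ∧
    -- (iii) upper saturation with `σ(t) ∈ [0, π]` (i.e. `s t ≥ 0`)
    (∀ t : ℝ, 0 ≤ t → b < θd t - kθ * s t → 0 ≤ s t →
      Vd t ≤ -kθ * (s t) ^ 2 ∧ Vd t ≤ 0) ∧
    -- and lower saturation with `σ(t) ∈ [-π, 0]` (i.e. `s t ≤ 0`)
    (∀ t : ℝ, 0 ≤ t → θd t - kθ * s t < a → s t ≤ 0 →
      Vd t ≤ -kθ * (s t) ^ 2 ∧ Vd t ≤ 0) := by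
  have hnonpos : ∀ t, -kθ * s t ^ 2 ≤ 0 := fun t => by nlinarith [sq_nonneg (s t)]
  refine ⟨fun t ht => ?_, fun t _ hlo hhi => ?_, fun t _ hhi hs₀ => ?_, fun t _ hlo hs₀ => ?_⟩
  · have hd₁ := (hχ₁.differentiable one_ne_zero t).hasDerivAt
    have hd₂ := (hχ₂.differentiable one_ne_zero t).hasDerivAt
    have hrate : θd t = (χ₁ t * deriv χ₂ t - χ₂ t * deriv χ₁ t) / (χ₁ t ^ 2 + χ₂ t ^ 2) := by
      rw [hθd, hnrm]
      field_simp
      rw [sq_sqrt (hnz t).le]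
      ring
    have hu₁ := hasDerivAt_fst_div_sqrt_normSq hd₁ hd₂ (hnz t)
    have hu₂ := hasDerivAt_snd_div_sqrt_normSq hd₁ hd₂ (hnz t)
    rw [← hrate] at hu₁ hu₂
    have hst : s t = sin (θ t) * (χ₁ t / √(χ₁ t ^ 2 + χ₂ t ^ 2)) -
        cos (θ t) * (χ₂ t / √(χ₁ t ^ 2 + χ₂ t ^ 2)) := by
      rw [hs, hnrm]
      ring
    rw [funext hV]
    simp only [hnrm]
    exact (hasDerivAt_half_sq_dist_heading (hctrl t ht) hu₁ hu₂).congr_deriv (by rw [hVd, hst])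
  · have hVd_eq : Vd t = -kθ * s t ^ 2 := by rw [hVd t, sat_eq_self hlo hhi]; ring
    exact ⟨hVd_eq, hVd_eq ▸ hnonpos t⟩
  · have hsat : (sat a b (θd t - kθ * s t) - (θd t - kθ * s t)) * s t ≤ 0 :=
      mul_nonpos_of_nonpos_of_nonneg (sub_nonpos.2 (sat_le_self (by linarith))) hs₀
    have hle := hVd t ▸ sub_mul_le_neg_mul_sq hsat
    exact ⟨hle, hle.trans (hnonpos t)⟩
  · have hsat : (sat a b (θd t - kθ * s t) - (θd t - kθ * s t)) * s t ≤ 0 :=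
      mul_nonpos_of_nonneg_of_nonpos (sub_nonneg.2 (self_le_sat (by linarith))) hs₀
    have hle := hVd t ▸ sub_mul_le_neg_mul_sq hsat
    exact ⟨hle, hle.trans (hnonpos t)⟩
end

section
/- Feasibility of the distributed safety program implies feasibility of the centralized one. Let n ≥ 1, N ≥ 1, and let ξ^1,…,ξ^N ∈ ℝ^{n+1}, P = diag(1,…,1,0) ∈ ℝ^{(n+1)×(n+1)}, R > 0, α > 0, h_ij = ‖P(ξ^i − ξ^j)‖² − R², and D_i = { j ∈ {1,…,N} : j ≠ i and h_ij ≤ 0 }. Suppose vectors u^1,…,u^N ∈ ℝ^{n+1} satisfy the distributed (QP2) constraints: for every i and every j ∈ D_i, (ξ^j − ξ^i)ᵀ Pᵀ u^i ≤ (α/4) h_ij³. Then the centralized (QP1) constraints hold: for every i and every j ∈ D_i, (ξ^j − ξ^i)ᵀ Pᵀ u^i + (ξ^i − ξ^j)ᵀ Pᵀ u^j ≤ (α/2) h_ij³. Hence any feasible point of QP2 is a feasible point of QP1. -/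
open Matrix

/-- **Feasibility of the distributed safety program (QP2) implies feasibility of the
centralized one (QP1).**  With generalized coordinates `ξ^i ∈ ℝ^{n+1}`, projection
`P = diag(1,…,1,0)` zeroing the virtual coordinate, safety functions
`h_ij = ‖P(ξ^i - ξ^j)‖² - R²`, and neighborhoods
`D_i = {j ≠ i : h_ij ≤ 0}`: if `(ξ^j - ξ^i)ᵀPᵀu^i ≤ (α/4) h_ij³` for all `i` and
`j ∈ D_i`, then `(ξ^j - ξ^i)ᵀPᵀu^i + (ξ^i - ξ^j)ᵀPᵀu^j ≤ (α/2) h_ij³` for all `i`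
and `j ∈ D_i`. -/
theorem distributed_qp_feasible_implies_centralized
    (n N : ℕ) (hn : 1 ≤ n) (hN : 1 ≤ N)
    (ξ : Fin N → Fin (n + 1) → ℝ)
    (u : Fin N → Fin (n + 1) → ℝ)
    (R α : ℝ) (hR : 0 < R) (hα : 0 < α)
    (P : Matrix (Fin (n + 1)) (Fin (n + 1)) ℝ)
    (hP : P = Matrix.diagonal (fun m => if m = Fin.last n then (0 : ℝ) else 1))
    (h : Fin N → Fin N → ℝ)
    (hh : ∀ i j, h i j =
      (P *ᵥ (ξ i - ξ j)) ⬝ᵥ (P *ᵥ (ξ i - ξ j)) - R ^ 2)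
    -- distributed (QP2) constraints
    (hQP2 : ∀ i j : Fin N, j ≠ i → h i j ≤ 0 →
      (ξ j - ξ i) ⬝ᵥ (P.transpose *ᵥ u i) ≤ α / 4 * (h i j) ^ 3) :
    -- centralized (QP1) constraints
    ∀ i j : Fin N, j ≠ i → h i j ≤ 0 →
      (ξ j - ξ i) ⬝ᵥ (P.transpose *ᵥ u i) + (ξ i - ξ j) ⬝ᵥ (P.transpose *ᵥ u j)
        ≤ α / 2 * (h i j) ^ 3 := by
  intro i j hji hle
  have hsym : h j i = h i j := by
    rw [hh, hh]
    have : ξ j - ξ i = -(ξ i - ξ j) := by ring_nf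
    rw [this, Matrix.mulVec_neg, neg_dotProduct, dotProduct_neg, neg_neg]
  have h1 := hQP2 i j hji hle
  have h2 := hQP2 j i (Ne.symm hji) (hsym ▸ hle)
  rw [hsym] at h2
  linarith
end
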